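/- Let β be the smallest Pisot number, i.e., the unique real root of X³ − X − 1, and let u = (β³, β, β³) and v = (β³, β³, β) be blocks of bases. For every Cantor real base B ∈ {u, v}^ω (an arbitrary infinite concatenation of the blocks u and v over the alphabet {β, β³}) and every n ≥ 0, the quasi-greedy expansion of 1 in the shifted base σ^{3n}(B) is the purely periodic word (200)^ω; in particular d*_B(1) = (200)^ω. Consequently, d*_B(1) is purely periodic for uncountably many aperiodic Cantor real bases B over {β, β³}. -/

import Mathlib

noncomputable section

/-- The quasi-greedy transformation `T*_β`, with `T*_β(0) = 0` and
`T*_β(x) = βx − ⌈βx − 1⌉` for `x ≠ 0`. -/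
def Tstar (β x : ℝ) : ℝ := if x = 0 then 0 else β * x - ⌈β * x - 1⌉

/-- `iterTstar B n r = (T*_{β_{n−1}} ∘ ⋯ ∘ T*_{β_0})(r)`. -/
def iterTstar (B : ℕ → ℝ) : ℕ → ℝ → ℝ
  | 0, r => r
  | n + 1, r => Tstar (B n) (iterTstar B n r)

/-- The `n`-th digit of the quasi-greedy `B`-expansion `d*_B(r)`. -/
def quasiGreedyDigit (B : ℕ → ℝ) (r : ℝ) (n : ℕ) : ℤ := ⌈B n * iterTstar B n r - 1⌉

/-- A sequence is ultimately periodic. -/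
def UltimatelyPeriodic {X : Type*} (f : ℕ → X) : Prop :=
  ∃ p : ℕ, 1 ≤ p ∧ ∃ N : ℕ, ∀ n, N ≤ n → f (n + p) = f n

/-!
Since `β³ = β + 1`, the quasi-greedy orbit of `1` returns to `1` after every block:
`1 ↦ β - 1 ↦ β² - β ↦ 1` along `u` and `1 ↦ β - 1 ↦ β² - 1 ↦ 1` along `v`, because
`β³ (β² - β) = 1 = β (β² - 1)`; both times the digits are `2, 0, 0`. Reading the middle letter
of each block recovers the choice of blocks, so aperiodic choices give distinct aperiodic bases,
and there are uncountably many of them since ultimately periodic sequences are countable.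
-/

lemma iterTstar_add (B : ℕ → ℝ) (r : ℝ) (m n : ℕ) :
    iterTstar B (m + n) r = iterTstar (fun i => B (m + i)) n (iterTstar B m r) := by
  induction n with
  | zero => rfl
  | succ n ih => rw [← Nat.add_assoc, iterTstar, iterTstar, ih]

lemma quasiGreedyDigit_add (B : ℕ → ℝ) (r : ℝ) (m n : ℕ) :
    quasiGreedyDigit B r (m + n) =
      quasiGreedyDigit (fun i => B (m + i)) (iterTstar B m r) n := by
  simp only [quasiGreedyDigit, iterTstar_add]

lemma quasiGreedyDigit_eq_iff {B : ℕ → ℝ} {r : ℝ} {n : ℕ} {d : ℤ} :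
    quasiGreedyDigit B r n = d ↔
      d < B n * iterTstar B n r ∧ B n * iterTstar B n r ≤ d + 1 := by
  rw [quasiGreedyDigit, Int.ceil_eq_iff]
  constructor <;> rintro ⟨h₁, h₂⟩ <;> constructor <;> linarith

lemma iterTstar_succ_of_ne_zero {B : ℕ → ℝ} {r : ℝ} {n : ℕ} (h : iterTstar B n r ≠ 0) :
    iterTstar B (n + 1) r = B n * iterTstar B n r - quasiGreedyDigit B r n := by
  rw [iterTstar, Tstar, if_neg h, quasiGreedyDigit]

lemma quasiGreedyDigit_eq_and_iterTstar_succ {B : ℕ → ℝ} {r b x y : ℝ} {n : ℕ} {d : ℤ}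
    (hb : B n = b) (hx : iterTstar B n r = x) (hx0 : x ≠ 0) (hy : b * x - d = y)
    (hy01 : y ∈ Set.Ioc 0 1) :
    quasiGreedyDigit B r n = d ∧ iterTstar B (n + 1) r = y := by
  have hd : quasiGreedyDigit B r n = d := by
    rw [quasiGreedyDigit_eq_iff, hb, hx]
    constructor <;> linarith [hy01.1, hy01.2]
  refine ⟨hd, ?_⟩
  rw [iterTstar_succ_of_ne_zero (hx ▸ hx0), hd, hb, hx, hy]

lemma injective_ite_of_ne {α : Type*} {a b : α} (h : a ≠ b) :
    Function.Injective fun x : Bool => if x then a else b :=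
  Bool.injective_iff.2 (by simpa using h.symm)

section UltimatelyPeriodic

variable {X : Type*}

lemma eq_of_periodic_of_eqOn {f g : ℕ → X} {p N : ℕ} (hp : 1 ≤ p)
    (hf : ∀ n, N ≤ n → f (n + p) = f n) (hg : ∀ n, N ≤ n → g (n + p) = g n)
    (h : ∀ n < N + p, f n = g n) : f = g := by
  funext n
  induction n using Nat.strong_induction_on with
  | _ n ih =>
    by_cases hn : n < N + p
    · exact h n hn
    · obtain ⟨m, rfl⟩ : ∃ m, n = m + p := ⟨n - p, by omega⟩
      rw [hf m (by omega), hg m (by omega), ih m (by omega)]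

lemma countable_setOf_ultimatelyPeriodic [Countable X] :
    {f : ℕ → X | UltimatelyPeriodic f}.Countable := by
  have periodic_from (p N : ℕ) (hp : 1 ≤ p) :
      {f : ℕ → X | ∀ n, N ≤ n → f (n + p) = f n}.Countable :=
    (Set.mapsTo_univ (fun f (j : Fin (N + p)) => f j) _).countable_of_injOn
      (fun f hf g hg h => eq_of_periodic_of_eqOn hp hf hg fun n hn => congrFun h ⟨n, hn⟩)
      Set.countable_univ
  refine Set.Countable.mono ?_ (Set.countable_iUnion fun p : {p : ℕ // 1 ≤ p} =>
    Set.countable_iUnion fun N => periodic_from p N p.2)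
  rintro f ⟨p, hp, N, hN⟩
  exact Set.mem_iUnion₂.2 ⟨⟨p, hp⟩, N, hN⟩

lemma not_countable_setOf_not_ultimatelyPeriodic :
    ¬ {f : ℕ → Bool | ¬ UltimatelyPeriodic f}.Countable := fun h => by
  have : Uncountable (ℕ → Bool) := by
    rw [← not_countable_iff, ← Cardinal.mk_le_aleph0_iff, not_le]
    simpa using Cardinal.cantor Cardinal.aleph0
  exact Set.not_countable_univ_iff.2 this
    ((countable_setOf_ultimatelyPeriodic.union h).mono fun f _ => em _)

lemma UltimatelyPeriodic.of_comp {Y : Type*} {g : X → Y} (hg : Function.Injective g)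
    {f : ℕ → X} (h : UltimatelyPeriodic (g ∘ f)) : UltimatelyPeriodic f :=
  let ⟨p, hp, N, hN⟩ := h
  ⟨p, hp, N, fun n hn => hg (hN n hn)⟩

lemma UltimatelyPeriodic.comp_mul_add {f : ℕ → X} (h : UltimatelyPeriodic f) {a : ℕ} (ha : 1 ≤ a)
    (b : ℕ) : UltimatelyPeriodic fun n => f (a * n + b) := by
  obtain ⟨p, hp, N, hN⟩ := h
  have hiter (k : ℕ) : ∀ n, N ≤ n → f (n + k * p) = f n := by
    induction k with
    | zero => simp
    | succ k ih => intro n hn; rw [Nat.succ_mul, ← add_assoc, hN _ (by omega), ih n hn]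
  refine ⟨p, hp, N, fun n hn => ?_⟩
  show f (a * (n + p) + b) = f (a * n + b)
  rw [show a * (n + p) + b = a * n + b + a * p by ring, hiter a _ (by nlinarith)]

end UltimatelyPeriodic

section SmallestPisot

variable {β : ℝ}

lemma one_lt_of_pisot_eq (hβ : β ^ 3 - β - 1 = 0) : 1 < β := by
  nlinarith [sq_nonneg (2 * β + 1), sq_nonneg (β - 1), sq_nonneg (β + 1), sq_nonneg (β * (β + 1))]

lemma sq_lt_two_of_pisot_eq (hβ : β ^ 3 - β - 1 = 0) : β ^ 2 < 2 := by
  nlinarith [one_lt_of_pisot_eq hβ]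

/-- `B ∈ {u, v}^ω`, where the `k`-th block of `B` is `v` if `ε k` and `u` otherwise. -/
def IsBlockBase (β : ℝ) (ε : ℕ → Bool) (B : ℕ → ℝ) : Prop :=
  ∀ k : ℕ, B (3 * k) = β ^ 3 ∧
    B (3 * k + 1) = (if ε k then β ^ 3 else β) ∧
    B (3 * k + 2) = (if ε k then β else β ^ 3)

lemma IsBlockBase.shift {ε : ℕ → Bool} {B : ℕ → ℝ} (hB : IsBlockBase β ε B) (n : ℕ) :
    IsBlockBase β (fun k => ε (n + k)) (fun i => B (3 * n + i)) := fun k => by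
  simpa only [mul_add, add_assoc] using hB (n + k)

lemma IsBlockBase.first_block (hβ : β ^ 3 - β - 1 = 0) {ε : ℕ → Bool} {B : ℕ → ℝ}
    (hB : IsBlockBase β ε B) :
    (∀ j < 3, quasiGreedyDigit B 1 j = if j % 3 = 0 then 2 else 0) ∧ iterTstar B 3 1 = 1 := by
  have h1 := one_lt_of_pisot_eq hβ
  have h2 := sq_lt_two_of_pisot_eq hβ
  obtain ⟨e0, e1, e2⟩ := hB 0
  simp only [mul_zero, zero_add] at e0 e1 e2
  obtain ⟨d0, i1⟩ := quasiGreedyDigit_eq_and_iterTstar_succ (x := 1) (d := 2) (y := β - 1) e0 rfl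
    one_ne_zero (by push_cast; linear_combination hβ) ⟨by linarith, by nlinarith⟩
  have digits (hd1 : quasiGreedyDigit B 1 1 = 0) (hd2 : quasiGreedyDigit B 1 2 = 0) :
      ∀ j < 3, quasiGreedyDigit B 1 j = if j % 3 = 0 then 2 else 0 := by
    intro j hj
    interval_cases j <;> simp [d0, hd1, hd2]
  cases hε : ε 0 <;> simp only [hε, if_true, if_false, Bool.false_eq_true] at e1 e2
  · obtain ⟨d1, i2⟩ := quasiGreedyDigit_eq_and_iterTstar_succ (d := 0) (y := β ^ 2 - β) e1 i1
      (by linarith) (by push_cast; ring) ⟨by nlinarith, by linarith⟩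
    obtain ⟨d2, i3⟩ := quasiGreedyDigit_eq_and_iterTstar_succ (d := 0) (y := 1) e2 i2
      (by nlinarith) (by push_cast; linear_combination (β ^ 2 - β + 1) * hβ) ⟨one_pos, le_rfl⟩
    exact ⟨digits d1 d2, i3⟩
  · obtain ⟨d1, i2⟩ := quasiGreedyDigit_eq_and_iterTstar_succ (d := 0) (y := β ^ 2 - 1) e1 i1
      (by linarith) (by push_cast; linear_combination (β - 1) * hβ) ⟨by nlinarith, by linarith⟩
    obtain ⟨d2, i3⟩ := quasiGreedyDigit_eq_and_iterTstar_succ (d := 0) (y := 1) e2 i2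
      (by nlinarith) (by push_cast; linear_combination hβ) ⟨one_pos, le_rfl⟩
    exact ⟨digits d1 d2, i3⟩

lemma IsBlockBase.iterTstar_three_mul (hβ : β ^ 3 - β - 1 = 0) {ε : ℕ → Bool} {B : ℕ → ℝ}
    (hB : IsBlockBase β ε B) (k : ℕ) : iterTstar B (3 * k) 1 = 1 := by
  induction k generalizing ε B with
  | zero => rfl
  | succ k ih =>
    rw [show 3 * (k + 1) = 3 * 1 + 3 * k by ring, iterTstar_add, (hB.first_block hβ).2,
      ih (hB.shift 1)]

lemma IsBlockBase.quasiGreedyDigit_one (hβ : β ^ 3 - β - 1 = 0) {ε : ℕ → Bool} {B : ℕ → ℝ}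
    (hB : IsBlockBase β ε B) (m : ℕ) :
    quasiGreedyDigit B 1 m = if m % 3 = 0 then 2 else 0 := by
  nth_rewrite 1 [← Nat.div_add_mod m 3]
  rw [quasiGreedyDigit_add, hB.iterTstar_three_mul hβ,
    ((hB.shift (m / 3)).first_block hβ).1 _ (Nat.mod_lt m three_pos), Nat.mod_mod]

lemma IsBlockBase.middle_eq {ε : ℕ → Bool} {B : ℕ → ℝ} (hB : IsBlockBase β ε B) :
    (fun k => B (3 * k + 1)) = (fun b : Bool => if b then β ^ 3 else β) ∘ ε :=
  funext fun k => (hB k).2.1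

lemma IsBlockBase.not_ultimatelyPeriodic (hβ : β ≠ β ^ 3) {ε : ℕ → Bool} {B : ℕ → ℝ}
    (hB : IsBlockBase β ε B) (hε : ¬ UltimatelyPeriodic ε) : ¬ UltimatelyPeriodic B := by
  refine fun h => hε (UltimatelyPeriodic.of_comp (injective_ite_of_ne hβ.symm) ?_)
  rw [← hB.middle_eq]
  exact h.comp_mul_add (by norm_num) 1

def blockBase (β : ℝ) (ε : ℕ → Bool) (i : ℕ) : ℝ :=
  if i % 3 = 0 then β ^ 3
  else if i % 3 = 1 then (if ε (i / 3) then β ^ 3 else β)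
  else (if ε (i / 3) then β else β ^ 3)

lemma isBlockBase_blockBase (β : ℝ) (ε : ℕ → Bool) : IsBlockBase β ε (blockBase β ε) := by
  intro k
  simp only [blockBase]
  refine ⟨?_, ?_, ?_⟩ <;> simp [Nat.mul_add_div]

lemma blockBase_mem (β : ℝ) (ε : ℕ → Bool) (i : ℕ) : blockBase β ε i ∈ ({β, β ^ 3} : Set ℝ) := by
  unfold blockBase
  split_ifs <;> simp

lemma blockBase_injective (hβ : β ≠ β ^ 3) : Function.Injective (blockBase β) := by
  intro ε ε' h
  have hm := (isBlockBase_blockBase β ε).middle_eq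
  rw [h, (isBlockBase_blockBase β ε').middle_eq] at hm
  exact ((injective_ite_of_ne hβ.symm).comp_left hm).symm

end SmallestPisot

/-- Let `β` be the smallest Pisot number, i.e. the real root of `X³ − X − 1`, and let
`u = (β³, β, β³)`, `v = (β³, β³, β)`.  For every Cantor real base `B ∈ {u,v}^ω`
(blockwise concatenation encoded by `ε : ℕ → Bool`, `ε k = true` meaning block `v`)
and every `n`, the quasi-greedy expansion of `1` in `σ^{3n}(B)` is `(200)^ω`; in
particular `d*_B(1) = (200)^ω`.  Consequently, `d*_B(1)` is purely periodic for
uncountably many aperiodic Cantor real bases `B` over `{β, β³}`. -/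
theorem smallest_pisot_two_walks_periodic
    (β : ℝ) (hβ : β ^ 3 - β - 1 = 0) :
    (∀ B : ℕ → ℝ,
      (∃ ε : ℕ → Bool, ∀ k : ℕ,
        B (3 * k) = β ^ 3 ∧
        B (3 * k + 1) = (if ε k then β ^ 3 else β) ∧
        B (3 * k + 2) = (if ε k then β else β ^ 3)) →
      ∀ n m : ℕ,
        quasiGreedyDigit (fun i => B (3 * n + i)) 1 m =
          (if m % 3 = 0 then 2 else 0)) ∧
    ¬ Set.Countable {B : ℕ → ℝ |
        (∀ i, B i ∈ ({β, β ^ 3} : Set ℝ)) ∧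
        ¬ UltimatelyPeriodic B ∧
        ∀ m : ℕ, quasiGreedyDigit B 1 m = (if m % 3 = 0 then 2 else 0)} := by
  have hne : β ≠ β ^ 3 := by nlinarith [one_lt_of_pisot_eq hβ]
  refine ⟨fun B ⟨ε, hB⟩ n => (IsBlockBase.shift hB n).quasiGreedyDigit_one hβ, fun hS => ?_⟩
  refine not_countable_setOf_not_ultimatelyPeriodic
    ((hS.preimage (blockBase_injective hne)).mono fun ε hε => ?_)
  have hB := isBlockBase_blockBase β ε
  exact ⟨blockBase_mem β ε, hB.not_ultimatelyPeriodic hne hε, hB.quasiGreedyDigit_one hβ⟩
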